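/- A compact Hausdorff space K is quasi weakly Radon–Nikodým if and only if for EVERY set Γ and every homeomorphic embedding of K into [0,1]^Γ, and for every ε > 0, there exists a countable decomposition Γ = ⋃_{n∈ℕ} Γₙ^ε such that for every n ∈ ℕ and all real numbers p < q with q − p > ε, the family of pairs (A_α⁰, A_α¹)_{α∈Γₙ^ε} does not contain an independent sequence, where A_α⁰ = {x ∈ K : x_α < p} and A_α¹ = {x ∈ K : x_α > q} for every α ∈ Γ. -/

import Mathlib

open Set Function

/-- A sequence of pairs of subsets `(A n, B n)` of a set `S` is *independent* if for every
`n` and every choice function `ε`, the intersection over `k < n` of `A k` (if `ε k = 0/false`)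
or `B k` (if `ε k = 1/true`) is nonempty. -/
def IsIndependentSeq {S : Type*} (A B : ℕ → Set S) : Prop :=
  ∀ (n : ℕ) (ε : Fin n → Bool),
    (⋂ k : Fin n, if ε k = true then B (k : ℕ) else A (k : ℕ)).Nonempty

/-- A compact space `K` is *quasi weakly Radon–Nikodým* (QWRN) if there is a homeomorphic
embedding `i` of `K` into `[0,1]^Γ` for some set `Γ` such that for every `ε > 0` there is a
countable decomposition `Γ = ⋃ n, Γs n` such that for every `n` and all reals `p < q` with
`q - p > ε`, the family of pairs `({x | (i x α : ℝ) < p}, {x | (i x α : ℝ) > q})`, `α ∈ Γs n`,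
contains no independent sequence. -/
def IsQWRN (K : Type*) [TopologicalSpace K] : Prop :=
  ∃ (Γ : Type) (i : K → Γ → unitInterval), Topology.IsEmbedding i ∧
    ∀ ε : ℝ, ε > 0 → ∃ Γs : ℕ → Set Γ, (⋃ n, Γs n) = Set.univ ∧
      ∀ n : ℕ, ∀ p q : ℝ, q - p > ε →
        ¬ ∃ φ : ℕ → Γ, (∀ m, φ m ∈ Γs n) ∧
          IsIndependentSeq (fun m => {x : K | (i x (φ m) : ℝ) < p})
                           (fun m => {x : K | (i x (φ m) : ℝ) > q})

/-! The easy direction uses the evaluation embedding of `K` into `[0,1]^C(K,[0,1])`.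

Conversely, fix an embedding `i₀` witnessing `IsQWRN K`. By compactness, every continuous `f`
is determined up to `δ` by finitely many coordinates of `i₀` read on a finite grid. Recording the
grid, the pieces of the decompositions for `i₀` containing these coordinates, and the approximate
values of `f` on the grid cells sorts all continuous functions into countably many classes. An
independent sequence inside one class has its sublevel sets covered by "low" cells and its
superlevel sets by "high" cells; a Ramsey-type splitting lemma, proved from the Nash-Williams
theorem, then gives one low and one high cell that are independent along a subsequence. These two
cells are separated in some coordinate, so that coordinate gives an independent sequence inside a
single piece of a decomposition for `i₀`. -/

section Independence

variable {S : Type*} {A B A' B' : ℕ → Set S}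

theorem isIndependentSeq_iff :
    IsIndependentSeq A B ↔
      ∀ (ν : ℕ → Bool) (n : ℕ), ∃ x, ∀ k < n, x ∈ if ν k then B k else A k := by
  refine ⟨fun h ν n => ?_, fun h n ε => ?_⟩
  · obtain ⟨x, hx⟩ := h n (fun k => ν k)
    exact ⟨x, fun k hk => mem_iInter.1 hx ⟨k, hk⟩⟩
  · obtain ⟨x, hx⟩ := h (fun k => if hk : k < n then ε ⟨k, hk⟩ else false) n
    exact ⟨x, mem_iInter.2 fun k => by simpa [k.isLt] using hx k k.isLt⟩

namespace IsIndependentSeq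

theorem mono (h : IsIndependentSeq A B) (hA : ∀ m, A m ⊆ A' m) (hB : ∀ m, B m ⊆ B' m) :
    IsIndependentSeq A' B' := by
  rw [isIndependentSeq_iff] at h ⊢
  intro ν n
  obtain ⟨x, hx⟩ := h ν n
  refine ⟨x, fun k hk => ?_⟩
  have hxk := hx k hk
  split_ifs at hxk ⊢
  exacts [hB k hxk, hA k hxk]

theorem symm (h : IsIndependentSeq A B) : IsIndependentSeq B A := by
  rw [isIndependentSeq_iff] at h ⊢
  intro ν n
  obtain ⟨x, hx⟩ := h (fun k => !ν k) n
  refine ⟨x, fun k hk => ?_⟩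
  have hxk := hx k hk
  revert hxk
  cases ν k <;> simp

theorem comp_strictMono (h : IsIndependentSeq A B) {e : ℕ → ℕ} (he : StrictMono e) :
    IsIndependentSeq (fun m => A (e m)) (fun m => B (e m)) := by
  rw [isIndependentSeq_iff] at h ⊢
  intro ν n
  obtain ⟨x, hx⟩ := h (extend e ν fun _ => false) (e n)
  exact ⟨x, fun k hk => by simpa [he.injective.extend_apply] using hx (e k) (he hk)⟩

theorem nonempty_left (h : IsIndependentSeq A B) (m : ℕ) : (A m).Nonempty := by
  obtain ⟨x, hx⟩ := isIndependentSeq_iff.1 h (fun _ => false) (m + 1)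
  exact ⟨x, by simpa using hx m m.lt_succ_self⟩

end IsIndependentSeq

def IsAlternating (A B : ℕ → Set S) : Prop :=
  ∀ n, ∃ x, ∀ k < n, x ∈ if Even k then A k else B k

end Independence

theorem exists_strictMono_forall_eq {β : Type*} [Finite β] (f : ℕ → β) :
    ∃ b, ∃ u : ℕ → ℕ, StrictMono u ∧ ∀ j, f (u j) = b := by
  obtain ⟨b, hb⟩ := Finite.exists_infinite_fiber f
  obtain ⟨u, hu, hub⟩ := Nat.exists_strictMono_subsequence fun N => by
    obtain ⟨n, hn, hNn⟩ := (infinite_coe_iff.1 hb).exists_gt N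
    exact ⟨n, hNn, hn⟩
  exact ⟨b, u, hu, hub⟩

namespace NashWilliams

variable (𝓕 : Set (Finset ℕ))

def Accepts (F : Finset ℕ) (M : Set ℕ) : Prop :=
  ∀ E : ℕ → ℕ, StrictMono E → range E ⊆ M → ∃ n, F ∪ (Finset.range n).image E ∈ 𝓕

def Rejects (F : Finset ℕ) (M : Set ℕ) : Prop :=
  ∀ M' ⊆ M, M'.Infinite → ¬ Accepts 𝓕 F M'

variable {𝓕}

theorem Rejects.mono {F : Finset ℕ} {M M' : Set ℕ} (h : Rejects 𝓕 F M) (hM : M' ⊆ M) :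
    Rejects 𝓕 F M' :=
  fun M'' hM'' => h M'' (hM''.trans hM)

theorem accepts_of_mem {F : Finset ℕ} (hF : F ∈ 𝓕) (M : Set ℕ) : Accepts 𝓕 F M :=
  fun _ _ _ => ⟨0, by simpa using hF⟩

variable (𝓕) in
structure State where
  chosen : Finset ℕ
  reservoir : Set ℕ
  infinite : reservoir.Infinite
  rejects : ∀ F ⊆ chosen, Rejects 𝓕 F reservoir

namespace State

noncomputable def head (s : State 𝓕) : ℕ := sInf s.reservoir

theorem head_mem (s : State 𝓕) : s.head ∈ s.reservoir := Nat.sInf_mem s.infinite.nonempty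

/-- One step of the diagonal construction: the head of the reservoir is either kept or
discarded. -/
def IsSucc (s t : State 𝓕) : Prop :=
  t.reservoir ⊆ s.reservoir ∩ Ioi s.head ∧
    (t.chosen = insert s.head s.chosen ∨
      t.chosen = s.chosen ∧ ∃ F ⊆ s.chosen, Accepts 𝓕 (insert s.head F) t.reservoir)

theorem exists_isSucc (s : State 𝓕) : ∃ t, s.IsSucc t := by
  classical
  set X := s.reservoir ∩ Ioi s.head
  have hX : X.Infinite :=
    (s.infinite.sdiff (finite_Iic s.head)).mono fun x hx => ⟨hx.1, by simpa using hx.2⟩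
  by_cases h : ∃ F ⊆ s.chosen, ∃ M ⊆ X, M.Infinite ∧ Accepts 𝓕 (insert s.head F) M
  · obtain ⟨F, hF, M, hMX, hM, hacc⟩ := h
    exact ⟨⟨s.chosen, M, hM, fun G hG => (s.rejects G hG).mono (hMX.trans inter_subset_left)⟩,
      hMX, Or.inr ⟨rfl, F, hF, hacc⟩⟩
  · push Not at h
    refine ⟨⟨insert s.head s.chosen, X, hX, fun G hG => ?_⟩, subset_rfl, Or.inl rfl⟩
    rw [Finset.subset_insert_iff] at hG
    by_cases hmG : s.head ∈ G
    · rw [← Finset.insert_erase hmG]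
      exact h _ hG
    · rw [Finset.erase_eq_of_notMem hmG] at hG
      exact (s.rejects G hG).mono inter_subset_left

noncomputable def next (s : State 𝓕) : State 𝓕 := s.exists_isSucc.choose

theorem isSucc_next (s : State 𝓕) : s.IsSucc s.next := s.exists_isSucc.choose_spec

variable (s : State 𝓕)

def Keeps (n : ℕ) : Prop :=
  (next^[n] s).next.chosen = insert (next^[n] s).head (next^[n] s).chosen

theorem reservoir_antitone : Antitone fun n => (next^[n] s).reservoir :=
  antitone_nat_of_succ_le fun n => by
    simpa only [iterate_succ_apply'] using (isSucc_next _).1.trans inter_subset_left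

theorem chosen_monotone : Monotone fun n => (next^[n] s).chosen :=
  monotone_nat_of_le_succ fun n => by
    simp only [iterate_succ_apply']
    rcases (isSucc_next (next^[n] s)).2 with h | h
    · exact h ▸ Finset.subset_insert _ _
    · exact h.1.ge

theorem head_strictMono : StrictMono fun n => (next^[n] s).head :=
  strictMono_nat_of_lt_succ fun n => by
    simp only [iterate_succ_apply']
    exact ((isSucc_next _).1 (head_mem _)).2

theorem head_mem_reservoir {k n : ℕ} (h : k < n) :
    (next^[n] s).head ∈ (next^[k] s).next.reservoir := by
  rw [← iterate_succ_apply' next]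
  exact reservoir_antitone s h (next^[n] s).head_mem

theorem accepts_image_head (F : Finset ℕ) {J : Set ℕ}
    (hJ : ∀ n ∈ J, Accepts 𝓕 (insert (next^[n] s).head F) (next^[n] s).next.reservoir) :
    Accepts 𝓕 F ((fun n => (next^[n] s).head) '' J) := by
  intro E hE hEJ
  obtain ⟨n₀, hn₀, hE0⟩ := hEJ ⟨0, rfl⟩
  have htail : range (fun k => E (k + 1)) ⊆ (next^[n₀] s).next.reservoir := by
    rintro _ ⟨k, rfl⟩
    obtain ⟨n, -, hn : (next^[n] s).head = E (k + 1)⟩ := hEJ ⟨k + 1, rfl⟩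
    have : n₀ < n := (head_strictMono s).lt_iff_lt.1 (by simp only [hE0, hn]; exact hE k.succ_pos)
    simpa only [← hn] using head_mem_reservoir s this
  obtain ⟨n, hn⟩ := hJ n₀ hn₀ _ (hE.comp fun _ _ h => Nat.succ_lt_succ h) htail
  refine ⟨n + 1, ?_⟩
  convert hn using 1
  rw [Finset.range_add_one', Finset.image_insert, Finset.map_eq_image, Finset.image_image,
    Finset.union_insert, Finset.insert_union, ← hE0]
  rfl

theorem exists_infinite_forall_not_mem (hK : {n | s.Keeps n}.Infinite) :
    ∃ M : Set ℕ, M.Infinite ∧ ∀ F : Finset ℕ, ↑F ⊆ M → F ∉ 𝓕 := by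
  refine ⟨(fun n => (next^[n] s).head) '' {n | s.Keeps n},
    hK.image (head_strictMono s).injective.injOn, fun F hF hF𝓕 => ?_⟩
  have hchosen : ∀ y ∈ F, ∃ n, y ∈ (next^[n] s).chosen := by
    intro y hy
    obtain ⟨n, hn : s.Keeps n, rfl⟩ := hF hy
    refine ⟨n + 1, ?_⟩
    rw [iterate_succ_apply', hn]
    exact Finset.mem_insert_self _ _
  choose! idx hidx using hchosen
  have hFN : F ⊆ (next^[F.sup idx] s).chosen :=
    fun y hy => chosen_monotone s (Finset.le_sup hy) (hidx y hy)
  exact (next^[F.sup idx] s).rejects F hFN _ subset_rfl (next^[F.sup idx] s).infinite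
    (accepts_of_mem hF𝓕 _)

theorem false_of_forall_not_keeps (h : ∀ n, ¬ s.Keeps n) : False := by
  have hstep : ∀ n, (next^[n] s).next.chosen = (next^[n] s).chosen ∧
      ∃ F ⊆ (next^[n] s).chosen,
        Accepts 𝓕 (insert (next^[n] s).head F) (next^[n] s).next.reservoir :=
    fun n => (isSucc_next _).2.resolve_left (h n)
  have hconst : ∀ n, (next^[n] s).chosen = s.chosen := by
    intro n
    induction n with
    | zero => rfl
    | succ n ih => rw [iterate_succ_apply', (hstep n).1, ih]
  choose G hG hGacc using fun n => (hstep n).2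
  -- infinitely many discarded heads share the same accepted `F`, and they accept `F` jointly
  obtain ⟨⟨F, hF⟩, u, hu, huF⟩ := exists_strictMono_forall_eq fun n =>
    (⟨G n, Finset.mem_powerset.2 (hconst n ▸ hG n)⟩ : s.chosen.powerset)
  have hacc := accepts_image_head s F (J := range u) fun _ ⟨j, hj⟩ => by
    simpa [← hj, show G (u j) = F from congrArg Subtype.val (huF j)] using hGacc (u j)
  have hsub : (fun n => (next^[n] s).head) '' range u ⊆ s.reservoir := by
    rintro _ ⟨n, -, rfl⟩
    exact reservoir_antitone s (Nat.zero_le n) (head_mem _)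
  exact s.rejects F (Finset.mem_powerset.1 hF) _ hsub
    ((infinite_range_of_injective hu.injective).image (head_strictMono s).injective.injOn) hacc

end State

end NashWilliams

open NashWilliams in
theorem nash_williams (𝓕 : Set (Finset ℕ)) :
    ∃ M : Set ℕ, M.Infinite ∧ ((∀ F : Finset ℕ, ↑F ⊆ M → F ∉ 𝓕) ∨
      ∀ E : ℕ → ℕ, StrictMono E → range E ⊆ M → ∃ n, (Finset.range n).image E ∈ 𝓕) := by
  by_cases h : ∃ M : Set ℕ, M.Infinite ∧ Accepts 𝓕 ∅ M
  · obtain ⟨M, hM, hacc⟩ := h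
    exact ⟨M, hM, Or.inr fun E hE hEM => by simpa using hacc E hE hEM⟩
  push Not at h
  let s : State 𝓕 := ⟨∅, univ, infinite_univ, fun F hF M _ hM => by
    rw [Finset.subset_empty.1 hF]
    exact h M hM⟩
  by_cases hK : {n | s.Keeps n}.Infinite
  · obtain ⟨M, hM, hM𝓕⟩ := s.exists_infinite_forall_not_mem hK
    exact ⟨M, hM, Or.inl hM𝓕⟩
  obtain ⟨n₀, hn₀⟩ := (not_infinite.1 hK).bddAbove
  refine ((State.next^[n₀ + 1] s).false_of_forall_not_keeps fun n hn => ?_).elim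
  have : n + (n₀ + 1) ≤ n₀ := hn₀ (show s.Keeps (n + (n₀ + 1)) by
    simpa only [State.Keeps, iterate_add_apply] using hn)
  omega

section Alternation

variable {S : Type*} {A B : ℕ → Set S}

theorem card_filter_lt_image_range {g : ℕ → ℕ} (hg : StrictMono g) {n r : ℕ} (hr : r < n) :
    (((Finset.range n).image g).filter (· < g r)).card = r := by
  have : ((Finset.range n).image g).filter (· < g r) = (Finset.range r).image g := by
    ext y
    simp only [Finset.mem_filter, Finset.mem_image, Finset.mem_range]
    constructor
    · rintro ⟨⟨j, -, rfl⟩, hj⟩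
      exact ⟨j, hg.lt_iff_lt.1 hj, rfl⟩
    · rintro ⟨j, hj, rfl⟩
      exact ⟨⟨j, hj.trans hr, rfl⟩, hg hj⟩
  rw [this, Finset.card_image_of_injective _ hg.injective, Finset.card_range]

/-- `IsAlternating` along the increasing enumeration of `F`, in which `y` sits at position
`(F.filter (· < y)).card`. -/
def IsAlternatingOn (A B : ℕ → Set S) (F : Finset ℕ) : Prop :=
  ∃ x, ∀ y ∈ F, x ∈ if Even (F.filter (· < y)).card then A y else B y

theorem isAlternatingOn_image_range_iff {g : ℕ → ℕ} (hg : StrictMono g) (n : ℕ) :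
    IsAlternatingOn A B ((Finset.range n).image g) ↔
      ∃ x, ∀ r < n, x ∈ if Even r then A (g r) else B (g r) := by
  refine exists_congr fun x => ⟨fun hx r hr => ?_, fun hx y hy => ?_⟩
  · simpa [card_filter_lt_image_range hg hr] using
      hx (g r) (Finset.mem_image_of_mem g (Finset.mem_range.2 hr))
  · obtain ⟨r, hr, rfl⟩ := Finset.mem_image.1 hy
    rw [card_filter_lt_image_range hg (Finset.mem_range.1 hr)]
    exact hx r (Finset.mem_range.1 hr)

/-- Each index `3 k + 1` is padded by `3 k` or `3 k + 2`, which puts it at an odd or an even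
position of a finite subset of `M`, as the pattern demands. -/
theorem isIndependentSeq_of_forall_isAlternatingOn {M : Set ℕ} (hM : M.Infinite)
    (h : ∀ F : Finset ℕ, ↑F ⊆ M → IsAlternatingOn A B F) :
    IsIndependentSeq (fun k => A (Nat.nth (· ∈ M) (3 * k + 1)))
      (fun k => B (Nat.nth (· ∈ M) (3 * k + 1))) := by
  refine isIndependentSeq_iff.2 fun ν n => ?_
  let ι : ℕ → ℕ := fun r => 3 * (r / 2) + r % 2 + if ν (r / 2) then 0 else 1
  have hι : StrictMono ι := strictMono_nat_of_lt_succ fun r => by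
    obtain ⟨j, rfl | rfl⟩ := Nat.even_or_odd' r
    · simp only [ι, show 2 * j / 2 = j by omega, show (2 * j + 1) / 2 = j by omega]
      split_ifs <;> omega
    · simp only [ι, show (2 * j + 1) / 2 = j by omega, show (2 * j + 1 + 1) / 2 = j + 1 by omega]
      split_ifs <;> omega
  have hF := h ((Finset.range (2 * n)).image (Nat.nth (· ∈ M) ∘ ι)) (by
    rw [Finset.coe_image]
    rintro _ ⟨r, -, rfl⟩
    exact Nat.nth_mem_of_infinite hM _)
  have ha : StrictMono (Nat.nth (· ∈ M)) := Nat.nth_strictMono hM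
  obtain ⟨x, hx⟩ := (isAlternatingOn_image_range_iff (ha.comp hι) _).1 hF
  refine ⟨x, fun k hk => ?_⟩
  cases hνk : ν k
  · have hx' := hx (2 * k) (by omega)
    simp only [ι, comp_apply, show 2 * k / 2 = k by omega, hνk] at hx'
    simpa [show 2 * k % 2 = 0 by omega] using hx'
  · have hx' := hx (2 * k + 1) (by omega)
    simp only [ι, comp_apply, show (2 * k + 1) / 2 = k by omega, hνk] at hx'
    simpa [show (2 * k + 1) % 2 = 1 by omega] using hx'

theorem exists_strictMono_isIndependentSeq_or_forall_not_isAlternating (A B : ℕ → Set S) :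
    ∃ e : ℕ → ℕ, StrictMono e ∧ (IsIndependentSeq (fun m => A (e m)) (fun m => B (e m)) ∨
      ∀ e' : ℕ → ℕ, StrictMono e' →
        ¬ IsAlternating (fun m => A (e (e' m))) (fun m => B (e (e' m)))) := by
  have ha (M : Set ℕ) (hM : M.Infinite) : StrictMono (Nat.nth (· ∈ M)) := Nat.nth_strictMono hM
  obtain ⟨M, hM, hgood | hbad⟩ := nash_williams {F | ¬ IsAlternatingOn A B F}
  · exact ⟨_, (ha M hM).comp fun _ _ _ => by omega, Or.inl
      (isIndependentSeq_of_forall_isAlternatingOn hM fun F hF => not_not.1 (hgood F hF))⟩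
  · refine ⟨Nat.nth (· ∈ M), ha M hM, Or.inr fun e' he' halt => ?_⟩
    obtain ⟨n, hn⟩ := hbad _ ((ha M hM).comp he') (by
      rintro _ ⟨i, rfl⟩
      exact Nat.nth_mem_of_infinite hM _)
    exact hn ((isAlternatingOn_image_range_iff ((ha M hM).comp he') n).2 (halt n))

end Alternation

theorem exists_strictMono_forall_mem {ι : Type*} (s : Finset ι) (P : ι → (ℕ → ℕ) → Prop)
    (hP : ∀ i (e e' : ℕ → ℕ), P i e → StrictMono e' → P i (e ∘ e'))
    (hex : ∀ i (e : ℕ → ℕ), StrictMono e → ∃ e', StrictMono e' ∧ P i (e ∘ e')) :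
    ∃ e, StrictMono e ∧ ∀ i ∈ s, P i e := by
  classical
  induction s using Finset.induction_on with
  | empty => exact ⟨id, strictMono_id, by simp⟩
  | insert i s _ ih =>
    obtain ⟨e, he, hs⟩ := ih
    obtain ⟨e', he', hi⟩ := hex i e he
    exact ⟨e ∘ e', he.comp he',
      (Finset.forall_mem_insert _ _ _).2 ⟨hi, fun j hj => hP j e e' (hs j hj) he'⟩⟩

theorem exists_labels_of_forall_mem_biUnion {S σ : Type*} [Finite σ] (R : ℕ → Set σ)
    (C : ℕ → σ → Set S)
    (h : ∀ n, ∃ x, ∀ k < n, x ∈ ⋃ c ∈ R k, C k c) :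
    ∃ τ : ℕ → σ, (∀ k, τ k ∈ R k) ∧ ∀ n, ∃ x, ∀ k < n, x ∈ C k (τ k) := by
  have : Nonempty σ := by
    obtain ⟨x, hx⟩ := h 1
    obtain ⟨c, -, -⟩ := mem_iUnion₂.1 (hx 0 one_pos)
    exact ⟨c⟩
  have hlabels : ∀ n, ∃ τ : ℕ → σ, ∃ x, ∀ k < n, τ k ∈ R k ∧ x ∈ C k (τ k) := by
    intro n
    obtain ⟨x, hx⟩ := h n
    simp only [mem_iUnion, exists_prop] at hx
    choose! τ hτ using hx
    exact ⟨τ, x, hτ⟩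
  choose τ x hτ using hlabels
  obtain ⟨χ, hχ⟩ := Finset.rado_selection fun t : Finset ℕ => τ t.card
  have hprefix : ∀ n, ∃ N, ∀ k < n, χ k = τ N k ∧ k < N := by
    intro n
    obtain ⟨t, hnt, hagree⟩ := hχ (Finset.range n)
    have hn : n ≤ t.card := by simpa using Finset.card_le_card hnt
    exact ⟨t.card, fun k hk => ⟨hagree k (Finset.mem_range.2 hk), hk.trans_le hn⟩⟩
  refine ⟨χ, fun k => ?_, fun n => ?_⟩
  · obtain ⟨N, hN⟩ := hprefix (k + 1)
    rw [(hN k k.lt_succ_self).1]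
    exact (hτ N k (hN k k.lt_succ_self).2).1
  · obtain ⟨N, hN⟩ := hprefix n
    exact ⟨x N, fun k hk => (hN k hk).1 ▸ (hτ N k (hN k hk).2).2⟩

section Labels

variable {S σ : Type*} [Finite σ] {L H : Set σ} {C : ℕ → σ → Set S}

/-- Some labelling `τ` with `τ k ∈ L` at even and `τ k ∈ H` at odd `k` has all its prefixes
realised; a pair `(τ (2 i), τ (2 i + 1))` occurring infinitely often then alternates. -/
theorem exists_isAlternating_of_isIndependentSeq_biUnion
    (h : IsIndependentSeq (fun m => ⋃ c ∈ L, C m c) (fun m => ⋃ d ∈ H, C m d)) :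
    ∃ c ∈ L, ∃ d ∈ H, ∃ e : ℕ → ℕ, StrictMono e ∧
      IsAlternating (fun m => C (e m) c) (fun m => C (e m) d) := by
  obtain ⟨τ, hτR, hτ⟩ := exists_labels_of_forall_mem_biUnion (fun k => if Even k then L else H) C
    fun n => by
      obtain ⟨x, hx⟩ := isIndependentSeq_iff.1 h (fun k => !decide (Even k)) n
      refine ⟨x, fun k hk => ?_⟩
      have hxk := hx k hk
      by_cases hk : Even k <;> simpa [hk] using hxk
  obtain ⟨⟨c, d⟩, u, hu, huI⟩ := exists_strictMono_forall_eq fun i => (τ (2 * i), τ (2 * i + 1))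
  simp only [Prod.mk.injEq] at huI
  set e : ℕ → ℕ := fun r => 2 * u (r / 2) + r % 2
  have he_even : ∀ j, e (2 * j) = 2 * u j := fun j => by simp [e]
  have he_odd : ∀ j, e (2 * j + 1) = 2 * u j + 1 := fun j => by
    simp only [e, show (2 * j + 1) / 2 = j by omega, show (2 * j + 1) % 2 = 1 by omega]
  have he : StrictMono e := strictMono_nat_of_lt_succ fun r => by
    obtain ⟨j, rfl | rfl⟩ := Nat.even_or_odd' r
    · rw [he_even, he_odd]
      omega
    · rw [he_odd, show 2 * j + 1 + 1 = 2 * (j + 1) by ring, he_even]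
      have := hu (show j < j + 1 by omega)
      omega
  have hc : c ∈ L := by simpa [(huI 0).1] using hτR (2 * u 0)
  have hd : d ∈ H := by simpa [(huI 0).2, Nat.not_even_iff_odd] using hτR (2 * u 0 + 1)
  refine ⟨c, hc, d, hd, e, he, fun n => ?_⟩
  obtain ⟨x, hx⟩ := hτ (e n)
  refine ⟨x, fun r hr => ?_⟩
  have hxr := hx (e r) (he hr)
  obtain ⟨j, rfl | rfl⟩ := Nat.even_or_odd' r
  · simpa [he_even, (huI j).1] using hxr
  · simpa [he_odd, (huI j).2, Nat.not_even_iff_odd] using hxr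

/-- If every pair of labels failed, then along a common subsequence no pair would admit an
alternating subsequence, contradicting `exists_isAlternating_of_isIndependentSeq_biUnion`. -/
theorem exists_isIndependentSeq_of_isIndependentSeq_biUnion
    (h : IsIndependentSeq (fun m => ⋃ c ∈ L, C m c) (fun m => ⋃ d ∈ H, C m d)) :
    ∃ c ∈ L, ∃ d ∈ H, ∃ e : ℕ → ℕ, StrictMono e ∧
      IsIndependentSeq (fun m => C (e m) c) (fun m => C (e m) d) := by
  have := Fintype.ofFinite σ
  let P : σ × σ → (ℕ → ℕ) → Prop := fun cd e =>
    IsIndependentSeq (fun m => C (e m) cd.1) (fun m => C (e m) cd.2) ∨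
      ∀ e' : ℕ → ℕ, StrictMono e' →
        ¬ IsAlternating (fun m => C (e (e' m)) cd.1) (fun m => C (e (e' m)) cd.2)
  obtain ⟨e, he, hP⟩ := exists_strictMono_forall_mem Finset.univ P
    (fun cd e e' hcd he' => hcd.imp (fun hind => hind.comp_strictMono he')
      fun hbad e'' he'' => hbad (e' ∘ e'') (he'.comp he''))
    (fun cd e _ => exists_strictMono_isIndependentSeq_or_forall_not_isAlternating
      (fun m => C (e m) cd.1) (fun m => C (e m) cd.2))
  obtain ⟨c, hc, d, hd, e', he', halt⟩ :=
    exists_isAlternating_of_isIndependentSeq_biUnion (h.comp_strictMono he)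
  rcases hP (c, d) (Finset.mem_univ _) with hind | hbad
  · exact ⟨c, hc, d, hd, e, he, hind⟩
  · exact (hbad e' he' halt).elim

end Labels

section Decomposition

variable {K ι κ : Type*}

def NoIndependentSeq (ε : ℝ) (g : ι → K → ℝ) (s : Set ι) : Prop :=
  ∀ p q : ℝ, q - p > ε → ¬ ∃ φ : ℕ → ι, (∀ m, φ m ∈ s) ∧
    IsIndependentSeq (fun m => {x | g (φ m) x < p}) (fun m => {x | g (φ m) x > q})

/-- For the coordinates `fun α x => (i x α : ℝ)` of `i : K → Γ → unitInterval`, this is the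
condition in `IsQWRN`. -/
def SigmaNoIndependentSeq (g : ι → K → ℝ) : Prop :=
  ∀ ε > 0, ∃ Γs : ℕ → Set ι, (⋃ n, Γs n) = univ ∧ ∀ n, NoIndependentSeq ε g (Γs n)

theorem SigmaNoIndependentSeq.of_countable [Countable κ] [Nonempty κ] {g : ι → K → ℝ}
    (T : ℝ → κ → Set ι) (hcover : ∀ ε > 0, ⋃ c, T ε c = univ)
    (hfree : ∀ ε > 0, ∀ c, NoIndependentSeq ε g (T ε c)) :
    SigmaNoIndependentSeq g := by
  obtain ⟨f, hf⟩ := exists_surjective_nat κ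
  exact fun ε hε => ⟨fun n => T ε (f n), by rw [hf.iUnion_comp (T ε)]; exact hcover ε hε,
    fun n => hfree ε hε (f n)⟩

end Decomposition

section Grid

def gridInterval (N j : ℕ) : Set ℝ := Icc (j / (N + 1)) ((j + 1) / (N + 1))

theorem exists_mem_gridInterval {t : ℝ} (ht : t ∈ Icc (0 : ℝ) 1) (N : ℕ) :
    ∃ j : Fin (N + 1), t ∈ gridInterval N j := by
  have hN : (0 : ℝ) < N + 1 := by positivity
  refine ⟨⟨min ⌊t * (N + 1)⌋₊ N, by omega⟩, ?_, ?_⟩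
  · rw [div_le_iff₀ hN]
    calc ((min ⌊t * (N + 1)⌋₊ N : ℕ) : ℝ) ≤ ⌊t * (N + 1)⌋₊ := by exact_mod_cast min_le_left _ _
      _ ≤ t * (N + 1) := Nat.floor_le (by nlinarith [ht.1])
  · rw [le_div_iff₀ hN, Nat.cast_min, ← min_add_add_right, le_min_iff]
    exact ⟨(Nat.lt_floor_add_one _).le, by nlinarith [ht.2]⟩

theorem abs_sub_le_of_mem_gridInterval {N j j' : ℕ} {a b : ℝ} (ha : a ∈ gridInterval N j)
    (hb : b ∈ gridInterval N j') (h₁ : j ≤ j' + 1) (h₂ : j' ≤ j + 1) :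
    |a - b| ≤ 2 / (N + 1) := by
  have hN : (0 : ℝ) < N + 1 := by positivity
  have h₁' : (j : ℝ) ≤ j' + 1 := by exact_mod_cast h₁
  have h₂' : (j' : ℝ) ≤ j + 1 := by exact_mod_cast h₂
  obtain ⟨ha₁, ha₂⟩ := ha
  obtain ⟨hb₁, hb₂⟩ := hb
  rw [div_le_iff₀ hN] at ha₁ hb₁
  rw [le_div_iff₀ hN] at ha₂ hb₂
  rw [abs_sub_le_iff, le_div_iff₀ hN, le_div_iff₀ hN]
  constructor <;> nlinarith

variable {K ι : Type*}

def gridCell (g : ι → K → ℝ) {k : ℕ} (β : Fin k → ι) (N : ℕ) (σ : Fin k → Fin (N + 1)) :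
    Set K :=
  {x | ∀ l, g (β l) x ∈ gridInterval N (σ l)}

def IsGridApprox (g : ι → K → ℝ) {k N : ℕ} (β : Fin k → ι) (v : (Fin k → Fin (N + 1)) → ℤ)
    (δ : ℝ) (f : K → ℝ) : Prop :=
  (∀ x y, (∀ l, |g (β l) x - g (β l) y| ≤ 2 / (N + 1)) → |f x - f y| ≤ δ) ∧
    ∀ σ, ∀ x ∈ gridCell g β N σ, |f x - v σ * δ| ≤ 2 * δ

end Grid

section Compact

variable {K Γ ι : Type*} [TopologicalSpace K] {g : Γ → K → ℝ}

theorem exists_finset_forall_abs_sub_lt [CompactSpace K] (hg : ∀ α, Continuous (g α))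
    (hsep : ∀ x y, x ≠ y → ∃ α, g α x ≠ g α y) {f : K → ℝ} (hf : Continuous f) {δ : ℝ}
    (hδ : 0 < δ) :
    ∃ (s : Finset Γ) (η : ℝ), 0 < η ∧
      ∀ x y, (∀ α ∈ s, |g α x - g α y| < η) → |f x - f y| < δ := by
  classical
  set D := {z : K × K | δ ≤ |f z.1 - f z.2|}
  have hD : IsCompact D := (isClosed_le continuous_const
    ((hf.comp continuous_fst).sub (hf.comp continuous_snd)).abs).isCompact
  let U : Γ × ℕ → Set (K × K) := fun αn => {z | 1 / (αn.2 + 1 : ℝ) < |g αn.1 z.1 - g αn.1 z.2|}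
  have hU : ∀ αn, IsOpen (U αn) := fun αn => isOpen_lt continuous_const
    (((hg αn.1).comp continuous_fst).sub ((hg αn.1).comp continuous_snd)).abs
  have hDU : D ⊆ ⋃ αn, U αn := by
    rintro ⟨x, y⟩ hxy
    have hne : x ≠ y := by
      rintro rfl
      simp only [D, mem_ofPred_eq, sub_self, abs_zero] at hxy
      linarith
    obtain ⟨α, hα⟩ := hsep x y hne
    obtain ⟨n, hn⟩ := exists_nat_one_div_lt (abs_pos.2 (sub_ne_zero.2 hα))
    exact mem_iUnion.2 ⟨(α, n), hn⟩
  obtain ⟨T, hT⟩ := hD.elim_finite_subcover U hU hDU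
  refine ⟨T.image Prod.fst, 1 / (T.sup Prod.snd + 1), by positivity, fun x y hxy => ?_⟩
  by_contra hfxy
  obtain ⟨⟨α, n⟩, hαn, hlt⟩ := mem_iUnion₂.1 (hT (show (x, y) ∈ D from not_lt.1 hfxy))
  have hη : 1 / ((T.sup Prod.snd : ℕ) + 1 : ℝ) ≤ 1 / (n + 1) :=
    one_div_le_one_div_of_le (by positivity)
      (by exact_mod_cast Nat.add_le_add_right (Finset.le_sup (f := Prod.snd) hαn) 1)
  have := hxy α (Finset.mem_image_of_mem _ hαn)
  simp only [U, mem_ofPred_eq] at hlt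
  linarith

theorem exists_isGridApprox [CompactSpace K] (hg : ∀ α, Continuous (g α))
    (hsep : ∀ x y, x ≠ y → ∃ α, g α x ≠ g α y) {f : K → ℝ} (hf : Continuous f) {δ : ℝ}
    (hδ : 0 < δ) :
    ∃ (k N : ℕ) (β : Fin k → Γ) (v : (Fin k → Fin (N + 1)) → ℤ), IsGridApprox g β v δ f := by
  obtain ⟨s, η, hη, hmod⟩ := exists_finset_forall_abs_sub_lt hg hsep hf hδ
  obtain ⟨N, hN⟩ := exists_nat_gt (2 / η)
  have hNη : 2 / ((N : ℝ) + 1) < η := by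
    rw [div_lt_iff₀ hη] at hN
    rw [div_lt_iff₀ (by positivity)]
    nlinarith
  set β : Fin s.card → Γ := fun l => s.equivFin.symm l
  have hβ : ∀ x y, (∀ l, |g (β l) x - g (β l) y| ≤ 2 / (N + 1)) → |f x - f y| ≤ δ :=
    fun x y hxy => (hmod x y fun α hα => by
      simpa [β] using (hxy (s.equivFin ⟨α, hα⟩)).trans_lt hNη).le
  have hv : ∀ σ, ∃ v : ℤ, ∀ x ∈ gridCell g β N σ, |f x - v * δ| ≤ 2 * δ := by
    intro σ
    rcases (gridCell g β N σ).eq_empty_or_nonempty with hempty | ⟨x₀, hx₀⟩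
    · exact ⟨0, by simp [hempty]⟩
    refine ⟨⌊f x₀ / δ⌋, fun x hx => ?_⟩
    have h₁ := abs_le.1 <| hβ x x₀ fun l =>
      abs_sub_le_of_mem_gridInterval (hx l) (hx₀ l) (by omega) (by omega)
    have h₂ := Int.sub_floor_div_mul_nonneg (f x₀) hδ
    have h₃ := Int.sub_floor_div_mul_lt (f x₀) hδ
    rw [abs_le]
    constructor <;> linarith
  choose v hv using hv
  exact ⟨s.card, N, β, v, hβ, hv⟩

end Compact

section Classes

variable {K Γ ι : Type*} {g : Γ → K → ℝ}

theorem not_isIndependentSeq_gridCell {k N : ℕ} {s : Set Γ}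
    (hs : NoIndependentSeq (1 / (4 * (N + 1))) g s) {β : ℕ → Fin k → Γ} {l : Fin k}
    (hβ : ∀ m, β m l ∈ s) {c d : Fin k → Fin (N + 1)} (hcd : (c l : ℕ) + 2 ≤ d l) :
    ¬ IsIndependentSeq (fun m => gridCell g (β m) N c) (fun m => gridCell g (β m) N d) := by
  have hN : (0 : ℝ) < N + 1 := by positivity
  have hcd' : (c l : ℝ) + 2 ≤ d l := by exact_mod_cast hcd
  intro h
  refine hs ((c l + 4 / 3) / (N + 1)) ((c l + 5 / 3) / (N + 1)) ?_
    ⟨fun m => β m l, hβ, h.mono (fun m x hx => ?_) (fun m x hx => ?_)⟩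
  · rw [← sub_div, gt_iff_lt, div_lt_div_iff₀ (by positivity) hN]
    nlinarith
  · exact (hx l).2.trans_lt (div_lt_div_of_pos_right (by linarith) hN)
  · exact (div_lt_div_of_pos_right (by linarith) hN).trans_le (hx l).1

theorem noIndependentSeq_gridClass {k N : ℕ} {S : ℕ → Set Γ}
    (hS : ∀ n, NoIndependentSeq (1 / (4 * (N + 1))) g (S n))
    (hg01 : ∀ α x, g α x ∈ Icc (0 : ℝ) 1) {F : ι → K → ℝ} (nv : Fin k → ℕ)
    (v : (Fin k → Fin (N + 1)) → ℤ) (ε : ℝ) :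
    NoIndependentSeq ε F
      {a | ∃ β : Fin k → Γ, (∀ l, β l ∈ S (nv l)) ∧ IsGridApprox g β v (ε / 9) (F a)} := by
  rintro p q hpq ⟨φ, hφ, hind⟩
  choose β hβS hβ using hφ
  set δ := ε / 9 with hδ
  have hcell : ∀ m x, ∃ σ, x ∈ gridCell g (β m) N σ := fun m x => by
    choose σ hσ using fun l => exists_mem_gridInterval (hg01 (β m l) x) N
    exact ⟨σ, hσ⟩
  have hlow : ∀ m, {x | F (φ m) x < p} ⊆
      ⋃ σ ∈ {σ | v σ * δ < p + 2 * δ}, gridCell g (β m) N σ := fun m x hx => by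
    obtain ⟨σ, hσ⟩ := hcell m x
    have := abs_le.1 ((hβ m).2 σ x hσ)
    exact mem_iUnion₂.2 ⟨σ, by simp only [mem_ofPred_eq] at hx ⊢; linarith, hσ⟩
  have hhigh : ∀ m, {x | F (φ m) x > q} ⊆
      ⋃ σ ∈ {σ | q - 2 * δ < v σ * δ}, gridCell g (β m) N σ := fun m x hx => by
    obtain ⟨σ, hσ⟩ := hcell m x
    have := abs_le.1 ((hβ m).2 σ x hσ)
    exact mem_iUnion₂.2 ⟨σ, by simp only [mem_ofPred_eq] at hx ⊢; linarith, hσ⟩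
  obtain ⟨c, hc, d, hd, e, -, hcd⟩ :=
    exists_isIndependentSeq_of_isIndependentSeq_biUnion (hind.mono hlow hhigh)
  -- a low cell and a high cell cannot be neighbours, so some coordinate separates them
  obtain ⟨l, hl⟩ : ∃ l, (c l : ℕ) + 2 ≤ d l ∨ (d l : ℕ) + 2 ≤ c l := by
    by_contra! hclose
    obtain ⟨x, hx⟩ := hcd.nonempty_left 0
    obtain ⟨y, hy⟩ := hcd.symm.nonempty_left 0
    have hxy := abs_le.1 <| (hβ (e 0)).1 x y fun l =>
      abs_sub_le_of_mem_gridInterval (hx l) (hy l) (by linarith [hclose l])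
        (by linarith [hclose l])
    have hx' := abs_le.1 ((hβ (e 0)).2 c x hx)
    have hy' := abs_le.1 ((hβ (e 0)).2 d y hy)
    simp only [mem_ofPred_eq] at hc hd
    linarith
  rcases hl with hl | hl
  · exact not_isIndependentSeq_gridCell (hS (nv l)) (fun m => hβS (e m) l) hl hcd
  · exact not_isIndependentSeq_gridCell (hS (nv l)) (fun m => hβS (e m) l) hl hcd.symm

variable [TopologicalSpace K] [CompactSpace K]

theorem SigmaNoIndependentSeq.of_separating (hg : ∀ α, Continuous (g α))
    (hsep : ∀ x y, x ≠ y → ∃ α, g α x ≠ g α y) (hg01 : ∀ α x, g α x ∈ Icc (0 : ℝ) 1)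
    (h : SigmaNoIndependentSeq g) {F : ι → K → ℝ} (hF : ∀ a, Continuous (F a)) :
    SigmaNoIndependentSeq F := by
  choose S hScover hS using fun N : ℕ => h (1 / (4 * (N + 1))) (by positivity)
  refine .of_countable (κ := Σ (k N : ℕ), (Fin k → ℕ) × ((Fin k → Fin (N + 1)) → ℤ))
    (fun ε ⟨k, N, nv, v⟩ =>
      {a | ∃ β : Fin k → Γ, (∀ l, β l ∈ S N (nv l)) ∧ IsGridApprox g β v (ε / 9) (F a)})
    (fun ε hε => eq_univ_of_forall fun a => ?_)
    (fun ε _ ⟨k, N, nv, v⟩ => noIndependentSeq_gridClass (hS N) hg01 nv v ε)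
  obtain ⟨k, N, β, v, hβ⟩ := exists_isGridApprox hg hsep (hF a) (by positivity : 0 < ε / 9)
  choose nv hnv using fun l => mem_iUnion.1 (hScover N ▸ mem_univ (β l))
  exact mem_iUnion.2 ⟨⟨k, N, nv, v⟩, β, hnv, hβ⟩

end Classes

theorem isEmbedding_eval_unitInterval (K : Type*) [TopologicalSpace K] [CompactSpace K]
    [T2Space K] : Topology.IsEmbedding fun (x : K) (f : C(K, unitInterval)) => f x :=
  ((continuous_pi fun f => f.continuous).isClosedEmbedding fun x y hxy => by
    by_contra hne
    obtain ⟨f, hf, hfxy⟩ := separatesPoints_continuous_of_t35Space_Icc hne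
    exact hfxy (congrFun hxy ⟨f, hf⟩)).isEmbedding

/-- A compact Hausdorff space `K` is QWRN iff for EVERY set `Γ` and every homeomorphic
embedding of `K` into `[0,1]^Γ` and every `ε > 0` there is a countable decomposition
`Γ = ⋃ n, Γs n` such that for every `n` and all reals `p < q` with `q - p > ε`, the family
of pairs `({x | x_α < p}, {x | x_α > q})`, `α ∈ Γs n`, contains no independent sequence. -/
theorem isQWRN_iff_forall_embedding
    (K : Type) [TopologicalSpace K] [CompactSpace K] [T2Space K] :
    IsQWRN K ↔ ∀ (Γ : Type) (i : K → Γ → unitInterval), Topology.IsEmbedding i →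
      ∀ ε : ℝ, ε > 0 → ∃ Γs : ℕ → Set Γ, (⋃ n, Γs n) = Set.univ ∧
        ∀ n : ℕ, ∀ p q : ℝ, q - p > ε →
          ¬ ∃ φ : ℕ → Γ, (∀ m, φ m ∈ Γs n) ∧
            IsIndependentSeq (fun m => {x : K | (i x (φ m) : ℝ) < p})
                             (fun m => {x : K | (i x (φ m) : ℝ) > q}) := by
  have hcoord : ∀ {Γ : Type} {i : K → Γ → unitInterval}, Topology.IsEmbedding i →
      ∀ α, Continuous fun x => (i x α : ℝ) :=
    fun hi α => continuous_subtype_val.comp ((continuous_apply α).comp hi.continuous)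
  constructor
  · rintro ⟨Γ₀, i₀, h₀, hfree⟩ Γ i hi
    refine SigmaNoIndependentSeq.of_separating (g := fun α x => (i₀ x α : ℝ)) (hcoord h₀)
      (fun x y hxy => ?_) (fun α x => (i₀ x α).2) hfree (hcoord hi)
    by_contra! hsame
    exact hxy (h₀.injective (funext fun α => Subtype.ext (hsame α)))
  · intro h
    exact ⟨_, _, isEmbedding_eval_unitInterval K, h _ _ (isEmbedding_eval_unitInterval K)⟩
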